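/- Let f : X → Y be a scheme morphism of finite presentation and let y ∈ Y be a point such that the fiber X_y is zero-dimensional. Then the fiber X_y is a finite set. -/

import Mathlib

open AlgebraicGeometry CategoryTheory CategoryTheory.Limits

theorem AlgebraicGeometry.Scheme.finite_of_topologicalKrullDim_le_zero (X : Scheme)
    [IsNoetherian X] (h : topologicalKrullDim X ≤ 0) : Finite X :=
  have : IsArtinianScheme X := { IsLocallyArtinian.of_topologicalKrullDim_le_zero h with }
  inferInstance

theorem stmt11_general {X Y : AlgebraicGeometry.Scheme} (f : X ⟶ Y)
    [LocallyOfFinitePresentation f] [QuasiCompact f] (y : Y)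
    (h : topologicalKrullDim
      (pullback f (Y.fromSpecResidueField y) : AlgebraicGeometry.Scheme) = 0) :
    Finite (pullback f (Y.fromSpecResidueField y) : AlgebraicGeometry.Scheme) := by
  have : CompactSpace (pullback f (Y.fromSpecResidueField y) : Scheme) :=
    QuasiCompact.compactSpace_of_compactSpace (pullback.snd _ _)
  -- Local Noetherianity is inferred: the fiber is of finite type over the field `κ(y)`.
  have : IsNoetherian (pullback f (Y.fromSpecResidueField y) : Scheme) := {}
  exact Scheme.finite_of_topologicalKrullDim_le_zero _ h.le

/-- If `f : X ⟶ Y` is of finite presentation and the fiber over `y` is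
zero-dimensional, then the fiber is a finite set. -/
theorem stmt11 {X Y : AlgebraicGeometry.Scheme} (f : X ⟶ Y)
    [LocallyOfFinitePresentation f] [QuasiCompact f] [QuasiSeparated f] (y : Y)
    (h : topologicalKrullDim
      (pullback f (Y.fromSpecResidueField y) : AlgebraicGeometry.Scheme) = 0) :
    Finite (pullback f (Y.fromSpecResidueField y) : AlgebraicGeometry.Scheme) :=
  stmt11_general f y h
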